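/- arXiv:2209.04356 — 4 statements merged into one kernel-verified Lean document; each statement's English description precedes it below -/
import Mathlib

section
/- Let C, X, Y be finite nonempty types and let p be a probability mass function on C × X × Y. Fix x ∈ X and y ∈ Y, and assume p(X = x, C = c) > 0 for every c ∈ C. Define the feasible set S as the set of pairs of vectors (a, b) ∈ (C → ℝ) × (C → ℝ) such that for every c ∈ C: 0 ≤ a_c ≤ b_c ≤ p(C = c), 0 < b_c, a_c ≤ p(X = x, Y = y), b_c ≤ p(X = x), a_c ≥ p(X = x, Y = y) + p(C = c) − 1, b_c ≥ p(X = x) + p(C = c) − 1, and additionally Σ_c a_c = p(X = x, Y = y) and Σ_c b_c = p(X = x). Then the back-door adjusted causal effect Σ_c p(X = x, Y = y, C = c) · p(C = c) / p(X = x, C = c) lies between the infimum and the supremum over (a, b) ∈ S of the objective Σ_c a_c · p(C = c) / b_c. -/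
/-! The observed point `(a, b) = (p(X = x, Y = y, C = ·), p(X = x, C = ·))` lies in the feasible
set, and at it the objective is exactly the back-door adjustment. The objective is bounded on
the feasible set, below by `0` and above by `Σ_c p(C = c) = 1` since `a ≤ b`, so `sInf` and
`sSup` are honest bounds there rather than the junk value `0`. -/

open Finset

/-- `p(X = x, Y = y, C = c)`: probability of the singleton `(c, x, y)`. -/
def pXYC {C X Y : Type*} (p : C × X × Y → ℝ) (x : X) (y : Y) (c : C) : ℝ :=
  p (c, x, y)

/-- `p(X = x, C = c)`: marginal over `Y`. -/
noncomputable def pXC {C X Y : Type*} [Fintype Y] (p : C × X × Y → ℝ) (x : X) (c : C) : ℝ :=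
  ∑ y' : Y, p (c, x, y')

/-- `p(X = x, Y = y)`: marginal over `C`. -/
noncomputable def pXY {C X Y : Type*} [Fintype C] (p : C × X × Y → ℝ) (x : X) (y : Y) : ℝ :=
  ∑ c : C, p (c, x, y)

/-- `p(X = x)`: marginal over `C` and `Y`. -/
noncomputable def pX {C X Y : Type*} [Fintype C] [Fintype Y] (p : C × X × Y → ℝ) (x : X) : ℝ :=
  ∑ c : C, ∑ y' : Y, p (c, x, y')

/-- `p(C = c)`: marginal over `X` and `Y`. -/
noncomputable def pC {C X Y : Type*} [Fintype X] [Fintype Y] (p : C × X × Y → ℝ) (c : C) : ℝ :=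
  ∑ x' : X, ∑ y' : Y, p (c, x', y')

/-- The feasible set `S` of the causal-bound optimization problem. -/
noncomputable def feasibleSet {C X Y : Type*} [Fintype C] [Fintype X] [Fintype Y]
    (p : C × X × Y → ℝ) (x : X) (y : Y) : Set ((C → ℝ) × (C → ℝ)) :=
  {ab | (∀ c : C,
          0 ≤ ab.1 c ∧ ab.1 c ≤ ab.2 c ∧ ab.2 c ≤ pC p c ∧ 0 < ab.2 c ∧
          ab.1 c ≤ pXY p x y ∧ ab.2 c ≤ pX p x ∧
          pXY p x y + pC p c - 1 ≤ ab.1 c ∧ pX p x + pC p c - 1 ≤ ab.2 c) ∧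
        (∑ c : C, ab.1 c) = pXY p x y ∧ (∑ c : C, ab.2 c) = pX p x}

/-- The objective `Σ_c a_c · p(C = c) / b_c` of the causal-bound optimization problem. -/
noncomputable def objective {C X Y : Type*} [Fintype C] [Fintype X] [Fintype Y]
    (p : C × X × Y → ℝ) (ab : (C → ℝ) × (C → ℝ)) : ℝ :=
  ∑ c : C, ab.1 c * pC p c / ab.2 c

section Marginals

variable {C X Y : Type*} {p : C × X × Y → ℝ}

theorem pC_nonneg [Fintype X] [Fintype Y] (hp : ∀ z, 0 ≤ p z) (c : C) : 0 ≤ pC p c :=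
  sum_nonneg fun _ _ => sum_nonneg fun _ _ => hp _

theorem pXC_le_pC [Fintype X] [Fintype Y] (hp : ∀ z, 0 ≤ p z) (x : X) (c : C) :
    pXC p x c ≤ pC p c :=
  single_le_sum (f := fun x' => ∑ y' : Y, p (c, x', y'))
    (fun _ _ => sum_nonneg fun _ _ => hp _) (mem_univ x)

theorem pXYC_le_pXC [Fintype Y] (hp : ∀ z, 0 ≤ p z) (x : X) (y : Y) (c : C) :
    pXYC p x y c ≤ pXC p x c :=
  single_le_sum (f := fun y' => p (c, x, y')) (fun _ _ => hp _) (mem_univ y)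

theorem pXYC_le_pXY [Fintype C] (hp : ∀ z, 0 ≤ p z) (x : X) (y : Y) (c : C) :
    pXYC p x y c ≤ pXY p x y :=
  single_le_sum (f := fun c' => p (c', x, y)) (fun _ _ => hp _) (mem_univ c)

theorem pXC_le_pX [Fintype C] [Fintype Y] (hp : ∀ z, 0 ≤ p z) (x : X) (c : C) :
    pXC p x c ≤ pX p x :=
  single_le_sum (f := fun c' => ∑ y' : Y, p (c', x, y'))
    (fun _ _ => sum_nonneg fun _ _ => hp _) (mem_univ c)

theorem sum_pC [Fintype C] [Fintype X] [Fintype Y] (hsum : ∑ z : C × X × Y, p z = 1) :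
    ∑ c : C, pC p c = 1 := by
  simp only [← hsum, Fintype.sum_prod_type, pC]

end Marginals

theorem Finset.sum_sub_le_sum_sub {ι M : Type*} [AddCommGroup M] [PartialOrder M]
    [IsOrderedAddMonoid M] [DecidableEq ι] {s : Finset ι} {f g : ι → M}
    (hfg : ∀ i ∈ s, f i ≤ g i) {i : ι} (hi : i ∈ s) :
    ∑ j ∈ s, f j - f i ≤ ∑ j ∈ s, g j - g i := by
  rw [← sum_erase_eq_sub hi, ← sum_erase_eq_sub hi]
  exact sum_le_sum fun j hj => hfg j (mem_of_mem_erase hj)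

theorem sum_add_pC_sub_one_le {C X Y : Type*} [Fintype C] [Fintype X] [Fintype Y]
    {p : C × X × Y → ℝ} (hsum : ∑ z : C × X × Y, p z = 1) {f : C → ℝ}
    (hf : ∀ c, f c ≤ pC p c) (c : C) : ∑ c', f c' + pC p c - 1 ≤ f c := by
  classical
  have := sum_sub_le_sum_sub (fun c' _ => hf c') (mem_univ c)
  rw [sum_pC hsum] at this
  linarith

section FeasibleSet

variable {C X Y : Type*} [Fintype C] [Fintype X] [Fintype Y]
  {p : C × X × Y → ℝ} {x : X} {y : Y}

theorem backdoor_mem_feasibleSet (hp : ∀ z, 0 ≤ p z) (hsum : ∑ z : C × X × Y, p z = 1)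
    (hpos : ∀ c : C, 0 < pXC p x c) : (pXYC p x y, pXC p x) ∈ feasibleSet p x y := by
  refine ⟨fun c => ⟨hp _, pXYC_le_pXC hp x y c, pXC_le_pC hp x c, hpos c,
    pXYC_le_pXY hp x y c, pXC_le_pX hp x c, ?_, ?_⟩, rfl, rfl⟩
  · exact sum_add_pC_sub_one_le hsum
      (fun c' => (pXYC_le_pXC hp x y c').trans (pXC_le_pC hp x c')) c
  · exact sum_add_pC_sub_one_le hsum (pXC_le_pC hp x) c

theorem objective_nonneg (hp : ∀ z, 0 ≤ p z) {ab : (C → ℝ) × (C → ℝ)}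
    (hab : ab ∈ feasibleSet p x y) : 0 ≤ objective p ab :=
  sum_nonneg fun c _ =>
    div_nonneg (mul_nonneg (hab.1 c).1 (pC_nonneg hp c)) (hab.1 c).2.2.2.1.le

theorem objective_le_one (hp : ∀ z, 0 ≤ p z) (hsum : ∑ z : C × X × Y, p z = 1)
    {ab : (C → ℝ) × (C → ℝ)} (hab : ab ∈ feasibleSet p x y) : objective p ab ≤ 1 := by
  rw [← sum_pC hsum]
  refine sum_le_sum fun c _ => ?_
  obtain ⟨-, hle, -, hb, -⟩ := hab.1 c
  rw [mul_div_right_comm]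
  exact mul_le_of_le_one_left (pC_nonneg hp c) (div_le_one_of_le₀ hle hb.le)

end FeasibleSet

theorem backdoor_between_inf_and_sup_general
    {C X Y : Type*} [Fintype C] [Fintype X] [Fintype Y]
    (p : C × X × Y → ℝ) (hp : ∀ z, 0 ≤ p z) (hsum : ∑ z : C × X × Y, p z = 1)
    (x : X) (y : Y)
    (hpos : ∀ c : C, 0 < pXC p x c) :
    sInf (objective p '' feasibleSet p x y) ≤
        (∑ c : C, pXYC p x y c * pC p c / pXC p x c) ∧
    (∑ c : C, pXYC p x y c * pC p c / pXC p x c) ≤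
        sSup (objective p '' feasibleSet p x y) := by
  have hmem : (∑ c : C, pXYC p x y c * pC p c / pXC p x c) ∈ objective p '' feasibleSet p x y :=
    ⟨_, backdoor_mem_feasibleSet hp hsum hpos, rfl⟩
  have hbdd_below : BddBelow (objective p '' feasibleSet p x y) :=
    ⟨0, by rintro _ ⟨ab, hab, rfl⟩; exact objective_nonneg hp hab⟩
  have hbdd_above : BddAbove (objective p '' feasibleSet p x y) :=
    ⟨1, by rintro _ ⟨ab, hab, rfl⟩; exact objective_le_one hp hsum hab⟩
  exact ⟨csInf_le hbdd_below hmem, le_csSup hbdd_above hmem⟩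

theorem backdoor_between_inf_and_sup
    {C X Y : Type*} [Fintype C] [Fintype X] [Fintype Y]
    [Nonempty C] [Nonempty X] [Nonempty Y]
    (p : C × X × Y → ℝ) (hp : ∀ z, 0 ≤ p z) (hsum : ∑ z : C × X × Y, p z = 1)
    (x : X) (y : Y)
    (hpos : ∀ c : C, 0 < pXC p x c) :
    sInf (objective p '' feasibleSet p x y) ≤
        (∑ c : C, pXYC p x y c * pC p c / pXC p x c) ∧
    (∑ c : C, pXYC p x y c * pC p c / pXC p x c) ≤
        sSup (objective p '' feasibleSet p x y) :=
  backdoor_between_inf_and_sup_general p hp hsum x y hpos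
end

section
/- Let y_0 < y_1 < ... < y_n be real numbers, let α ∈ (0, 1], and let a_0, ..., a_n and b_0, ..., b_n be reals with 0 ≤ a_i ≤ b_i ≤ 1 for all i. Define the feasible set S = { q ∈ ℝ^{n+1} : a_i ≤ q_i ≤ b_i for all i, q_i ≥ 0, and Σ_{i=0}^n q_i = 1 }, and for q ∈ S define m(q) = (1/α) · ( Σ_{i=0}^{k(q)−1} y_i q_i + y_{k(q)} · (α − Σ_{i=0}^{k(q)−1} q_i) ), where k(q) is the smallest index with Σ_{i=0}^{k(q)} q_i ≥ α. Let Y be a random variable taking value y_i with probability p_i, where p ∈ S. Then inf_{q ∈ S} m(q) ≤ CVaR_α(Y) ≤ sup_{q ∈ S} m(q). -/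
/-!
Rockafellar–Uryasev: the objective `ν ↦ ν - (1/α) E[(ν - Y)⁺]` is maximised at the `α`-quantile
`ν = y_{k(q)}`, and its maximum is `m(q)`. Indeed, with the weights `w_i = q_i` for `i < k`,
`w_k = α - Σ_{i<k} q_i` and `w_i = 0` beyond `k`, one has `0 ≤ w_i ≤ q_i` and `Σ w_i = α`, so
`E[(ν - Y)⁺] ≥ Σ w_i (ν - y_i) = α ν - α m(q)`, with equality at `ν = y_k` because `y` is
increasing. Hence `CVaR_α(Y) = m(p)`, and as `m` takes values in `[y_0, y_n]` on `S`, the value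
`m(p)` lies between the infimum and the supremum of `m` over `S`.
-/

open Finset

/-- CVaR at level `α` of a discrete random variable taking value `y i` with
probability `q i` for `i = 0, …, n`:
`CVaR_α(Y) = sup_ν { ν − (1/α)·E[(ν − Y)^+] }`. -/
noncomputable def discreteCVaR (α : ℝ) (n : ℕ) (y q : ℕ → ℝ) : ℝ :=
  ⨆ ν : ℝ, (ν - (1 / α) * ∑ i ∈ Finset.range (n + 1), q i * max (ν - y i) 0)

/-- `k(q)`: the smallest index `k` such that `Σ_{i=0}^k q_i ≥ α`. -/
noncomputable def kIdx (α : ℝ) (q : ℕ → ℝ) : ℕ :=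
  sInf {k : ℕ | α ≤ ∑ i ∈ Finset.range (k + 1), q i}

/-- The closed-form CVaR objective
`m(q) = (1/α)·( Σ_{i<k(q)} y_i q_i + y_{k(q)}·(α − Σ_{i<k(q)} q_i) )`. -/
noncomputable def mObj (α : ℝ) (y q : ℕ → ℝ) : ℝ :=
  (1 / α) * ((∑ i ∈ Finset.range (kIdx α q), y i * q i) +
    y (kIdx α q) * (α - ∑ i ∈ Finset.range (kIdx α q), q i))

section

variable {α : ℝ} {n : ℕ} {q y : ℕ → ℝ}

lemma kIdx_le (h : α ≤ ∑ i ∈ range (n + 1), q i) : kIdx α q ≤ n :=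
  Nat.sInf_le h

lemma le_sum_range_kIdx_succ (h : α ≤ ∑ i ∈ range (n + 1), q i) :
    α ≤ ∑ i ∈ range (kIdx α q + 1), q i :=
  Nat.sInf_mem (s := {k : ℕ | α ≤ ∑ i ∈ range (k + 1), q i}) ⟨n, h⟩

lemma sum_range_kIdx_lt (hα : 0 < α) : ∑ i ∈ range (kIdx α q), q i < α := by
  rcases hk : kIdx α q with _ | m
  · simpa using hα
  · have hm : m < kIdx α q := by rw [hk]; exact m.lt_succ_self
    simpa using Nat.notMem_of_lt_sInf hm

/-- `q` cut down to its lower tail of total mass `α`; these weights certify that `y (kIdx α q)`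
maximises the Rockafellar–Uryasev objective. -/
noncomputable def cvarWeight (α : ℝ) (q : ℕ → ℝ) (i : ℕ) : ℝ :=
  if i < kIdx α q then q i
  else if i = kIdx α q then α - ∑ j ∈ range (kIdx α q), q j
  else 0

lemma cvarWeight_mem_Icc (hα : 0 < α) (h : α ≤ ∑ i ∈ range (n + 1), q i) {i : ℕ}
    (hqi : 0 ≤ q i) : cvarWeight α q i ∈ Set.Icc 0 (q i) := by
  have hlt := sum_range_kIdx_lt (q := q) hα
  have hle := le_sum_range_kIdx_succ h
  rw [sum_range_succ] at hle
  unfold cvarWeight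
  split_ifs with hik hik'
  · exact ⟨hqi, le_rfl⟩
  · subst hik'
    constructor <;> linarith
  · exact ⟨le_rfl, hqi⟩

lemma sum_range_cvarWeight_mul {N : ℕ} (hN : kIdx α q < N) (y : ℕ → ℝ) :
    ∑ i ∈ range N, cvarWeight α q i * y i =
      ∑ i ∈ range (kIdx α q), y i * q i +
        y (kIdx α q) * (α - ∑ i ∈ range (kIdx α q), q i) := by
  set k := kIdx α q
  have htail : ∑ i ∈ Ico (k + 1) N, cvarWeight α q i * y i = 0 :=
    sum_eq_zero fun i hi => by
      have hki : k < i := (mem_Ico.1 hi).1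
      simp [cvarWeight, k, hki.not_gt, hki.ne']
  have hhead : ∑ i ∈ range k, cvarWeight α q i * y i = ∑ i ∈ range k, y i * q i :=
    sum_congr rfl fun i hi => by
      rw [cvarWeight, if_pos (mem_range.1 hi), mul_comm]
  rw [← sum_range_add_sum_Ico _ hN, htail, add_zero, sum_range_succ, hhead, cvarWeight,
    if_neg (lt_irrefl k), if_pos rfl, mul_comm]

lemma sum_range_cvarWeight {N : ℕ} (hN : kIdx α q < N) :
    ∑ i ∈ range N, cvarWeight α q i = α := by
  simpa using sum_range_cvarWeight_mul hN (fun _ => 1)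

lemma sum_range_cvarWeight_mul_eq_mul_mObj (hα : 0 < α) {N : ℕ} (hN : kIdx α q < N) :
    ∑ i ∈ range N, cvarWeight α q i * y i = α * mObj α y q := by
  rw [sum_range_cvarWeight_mul hN, mObj]
  field_simp

lemma sum_range_cvarWeight_mul_sub (hα : 0 < α) {N : ℕ} (hN : kIdx α q < N) (ν : ℝ) :
    ∑ i ∈ range N, cvarWeight α q i * (ν - y i) = α * ν - α * mObj α y q := by
  calc ∑ i ∈ range N, cvarWeight α q i * (ν - y i)
        = (∑ i ∈ range N, cvarWeight α q i) * ν - ∑ i ∈ range N, cvarWeight α q i * y i := by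
          rw [sum_mul, ← sum_sub_distrib]
          exact sum_congr rfl fun i _ => by ring
    _ = α * ν - α * mObj α y q := by
          rw [sum_range_cvarWeight hN, sum_range_cvarWeight_mul_eq_mul_mObj hα hN, mul_comm]

lemma mul_le_mul_max_zero {w c x : ℝ} (hw : 0 ≤ w) (hwc : w ≤ c) : w * x ≤ c * max x 0 := by
  rcases le_total 0 x with hx | hx
  · rw [max_eq_left hx]
    exact mul_le_mul_of_nonneg_right hwc hx
  · rw [max_eq_right hx, mul_zero]
    exact mul_nonpos_of_nonneg_of_nonpos hw hx

lemma mul_max_sub_eq_cvarWeight_mul (hy : MonotoneOn y (Set.Iic n)) (hk : kIdx α q ≤ n)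
    {i : ℕ} (hi : i ≤ n) :
    q i * max (y (kIdx α q) - y i) 0 = cvarWeight α q i * (y (kIdx α q) - y i) := by
  unfold cvarWeight
  split_ifs with hik hik'
  · rw [max_eq_left (sub_nonneg.2 (hy hi hk hik.le))]
  · subst hik'
    simp
  · rw [max_eq_right (sub_nonpos.2 (hy hk hi (by omega))), mul_zero, zero_mul]

noncomputable def cvarObjective (α : ℝ) (n : ℕ) (y q : ℕ → ℝ) (ν : ℝ) : ℝ :=
  ν - (1 / α) * ∑ i ∈ range (n + 1), q i * max (ν - y i) 0

lemma cvarObjective_le_mObj (hα : 0 < α) (h : α ≤ ∑ i ∈ range (n + 1), q i)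
    (hq : ∀ i ≤ n, 0 ≤ q i) (ν : ℝ) : cvarObjective α n y q ν ≤ mObj α y q := by
  have hk : kIdx α q < n + 1 := Nat.lt_succ_of_le (kIdx_le h)
  have hpen : α * ν - α * mObj α y q ≤ ∑ i ∈ range (n + 1), q i * max (ν - y i) 0 := by
    rw [← sum_range_cvarWeight_mul_sub hα hk]
    refine sum_le_sum fun i hi => ?_
    have hw := cvarWeight_mem_Icc hα h (hq i (Nat.lt_succ_iff.1 (mem_range.1 hi)))
    exact mul_le_mul_max_zero hw.1 hw.2
  calc cvarObjective α n y q ν ≤ ν - 1 / α * (α * ν - α * mObj α y q) := by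
        unfold cvarObjective; gcongr
    _ = mObj α y q := by field_simp; ring

lemma cvarObjective_kIdx_eq_mObj (hα : 0 < α) (h : α ≤ ∑ i ∈ range (n + 1), q i)
    (hy : MonotoneOn y (Set.Iic n)) :
    cvarObjective α n y q (y (kIdx α q)) = mObj α y q := by
  have hk := kIdx_le h
  have hpen : ∑ i ∈ range (n + 1), q i * max (y (kIdx α q) - y i) 0 =
      α * y (kIdx α q) - α * mObj α y q := by
    rw [← sum_range_cvarWeight_mul_sub hα (Nat.lt_succ_of_le hk)]
    exact sum_congr rfl fun i hi =>
      mul_max_sub_eq_cvarWeight_mul hy hk (Nat.lt_succ_iff.1 (mem_range.1 hi))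
  rw [cvarObjective, hpen]
  field_simp
  ring

theorem discreteCVaR_eq_mObj (hα : 0 < α) (h : α ≤ ∑ i ∈ range (n + 1), q i)
    (hq : ∀ i ≤ n, 0 ≤ q i) (hy : MonotoneOn y (Set.Iic n)) :
    discreteCVaR α n y q = mObj α y q := by
  have hle := cvarObjective_le_mObj (y := y) hα h hq
  refine le_antisymm (ciSup_le hle) ?_
  rw [← cvarObjective_kIdx_eq_mObj hα h hy]
  exact le_ciSup (f := cvarObjective α n y q) ⟨_, Set.forall_mem_range.2 hle⟩ _

lemma mObj_mem_Icc (hα : 0 < α) (h : α ≤ ∑ i ∈ range (n + 1), q i)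
    (hq : ∀ i ≤ n, 0 ≤ q i) (hy : MonotoneOn y (Set.Iic n)) :
    mObj α y q ∈ Set.Icc (y 0) (y n) := by
  have hk : kIdx α q < n + 1 := Nat.lt_succ_of_le (kIdx_le h)
  have hw : ∀ i ∈ range (n + 1), i ≤ n ∧ 0 ≤ cvarWeight α q i := fun i hi =>
    have hi' := Nat.lt_succ_iff.1 (mem_range.1 hi)
    ⟨hi', (cvarWeight_mem_Icc hα h (hq i hi')).1⟩
  have hmean := sum_range_cvarWeight_mul_eq_mul_mObj (y := y) hα hk
  constructor
  · refine le_of_mul_le_mul_left ?_ hα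
    calc α * y 0 = ∑ i ∈ range (n + 1), cvarWeight α q i * y 0 := by
          rw [← sum_mul, sum_range_cvarWeight hk]
      _ ≤ α * mObj α y q := hmean ▸ sum_le_sum fun i hi =>
          mul_le_mul_of_nonneg_left (hy (Nat.zero_le n) (hw i hi).1 (Nat.zero_le i)) (hw i hi).2
  · refine le_of_mul_le_mul_left ?_ hα
    calc α * mObj α y q ≤ ∑ i ∈ range (n + 1), cvarWeight α q i * y n := hmean ▸ sum_le_sum
          fun i hi => mul_le_mul_of_nonneg_left
            (hy (hw i hi).1 Set.self_mem_Iic (hw i hi).1) (hw i hi).2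
      _ = α * y n := by rw [← sum_mul, sum_range_cvarWeight hk]

end

theorem cvar_between_inf_and_sup_of_mObj_general
    (n : ℕ) (y : ℕ → ℝ) (α : ℝ) (hα : α ∈ Set.Ioc (0 : ℝ) 1)
    (hmono : ∀ i j, i < j → j ≤ n → y i < y j)
    (a b : ℕ → ℝ)
    (S : Set (ℕ → ℝ))
    (hS : S = {q | (∀ i, i ≤ n → a i ≤ q i ∧ q i ≤ b i ∧ 0 ≤ q i) ∧
                   ∑ i ∈ Finset.range (n + 1), q i = 1})
    (p : ℕ → ℝ) (hp : p ∈ S) :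
    sInf ((fun q => mObj α y q) '' S) ≤ discreteCVaR α n y p ∧
    discreteCVaR α n y p ≤ sSup ((fun q => mObj α y q) '' S) := by
  obtain ⟨hα0, hα1⟩ := hα
  have hfeas : ∀ q ∈ S, α ≤ ∑ i ∈ range (n + 1), q i ∧ ∀ i ≤ n, 0 ≤ q i := by
    rw [hS]
    rintro q ⟨hq, hsum⟩
    exact ⟨hsum ▸ hα1, fun i hi => (hq i hi).2.2⟩
  have hy : MonotoneOn y (Set.Iic n) := fun i _ j hj hij =>
    hij.eq_or_lt.elim (fun h => h ▸ le_rfl) fun h => (hmono i j h hj).le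
  have hbdd : (fun q => mObj α y q) '' S ⊆ Set.Icc (y 0) (y n) := by
    rintro _ ⟨q, hq, rfl⟩
    exact mObj_mem_Icc hα0 (hfeas q hq).1 (hfeas q hq).2 hy
  have hpm := Set.mem_image_of_mem (fun q => mObj α y q) hp
  rw [discreteCVaR_eq_mObj hα0 (hfeas p hp).1 (hfeas p hp).2 hy]
  exact ⟨csInf_le (bddBelow_Icc.mono hbdd) hpm, le_csSup (bddAbove_Icc.mono hbdd) hpm⟩

theorem cvar_between_inf_and_sup_of_mObj
    (n : ℕ) (y : ℕ → ℝ) (α : ℝ) (hα : α ∈ Set.Ioc (0 : ℝ) 1)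
    (hmono : ∀ i j, i < j → j ≤ n → y i < y j)
    (a b : ℕ → ℝ) (hab : ∀ i, i ≤ n → 0 ≤ a i ∧ a i ≤ b i ∧ b i ≤ 1)
    (S : Set (ℕ → ℝ))
    (hS : S = {q | (∀ i, i ≤ n → a i ≤ q i ∧ q i ≤ b i ∧ 0 ≤ q i) ∧
                   ∑ i ∈ Finset.range (n + 1), q i = 1})
    (p : ℕ → ℝ) (hp : p ∈ S) :
    sInf ((fun q => mObj α y q) '' S) ≤ discreteCVaR α n y p ∧
    discreteCVaR α n y p ≤ sSup ((fun q => mObj α y q) '' S) :=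
  cvar_between_inf_and_sup_of_mObj_general n y α hα hmono a b S hS p hp
end

section
/- Let α ∈ (0, 1), q ∈ [0, 1], and let M ≥ 1/α be a real constant. Suppose m ∈ {0, 1} and n ∈ ℝ satisfy the constraints: q ≤ α + M(1 − m), −q ≤ −α + M m, n ≤ M m, n ≤ q/α, n ≥ q/α − M(1 − m), and n ≥ 0. Then m − n = max(0, 1 − q/α). Moreover, such a feasible pair (m, n) exists: if q ≥ α then (m, n) = (0, 0) is feasible, and if q ≤ α then (m, n) = (1, q/α) is feasible. Consequently the minimum and the maximum of the objective m − n over the feasible set both equal max(0, 1 − q/α). -/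
/-! In a feasible point the binary `m` selects the case of the CVaR formula: `m = 0` forces
`α ≤ q` and squeezes `n` to `0`, while `m = 1` forces `q ≤ α` and squeezes `n` to `q / α`.
Either way `m - n = max 0 (1 - q / α)`, so the objective is constant on the feasible set, and
`M ≥ 1 / α` is large enough for the corresponding point of each case to be feasible. -/

/-- The feasibility constraints of the mixed-integer reformulation (with the
binary constraint `m = 0 ∨ m = 1` included). -/
def MIPFeasible (α q M m n : ℝ) : Prop :=
  (m = 0 ∨ m = 1) ∧
  q ≤ α + M * (1 - m) ∧
  -q ≤ -α + M * m ∧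
  n ≤ M * m ∧
  n ≤ q / α ∧
  q / α - M * (1 - m) ≤ n ∧
  0 ≤ n

namespace MIPFeasible

variable {α q M m n : ℝ}

theorem sub_eq_max (hα : 0 < α) (h : MIPFeasible α q M m n) :
    m - n = max 0 (1 - q / α) := by
  obtain ⟨rfl | rfl, hqα, hαq, hnM, hn_le, hn_ge, hn_nonneg⟩ := h
  · have h_one_le : 1 ≤ q / α := (one_le_div hα).2 (by linarith)
    have hn : n = 0 := le_antisymm (by simpa using hnM) hn_nonneg
    rw [hn, max_eq_left (by linarith)]
    ring
  · have h_le_one : q / α ≤ 1 := (div_le_one hα).2 (by linarith)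
    have hn : n = q / α := le_antisymm hn_le (by simpa using hn_ge)
    rw [hn, max_eq_right (by linarith)]

end MIPFeasible

variable {α q M : ℝ}

theorem mipFeasible_zero_zero (hα : 0 < α) (hαq : α ≤ q) (hq : q ≤ α + M) (hqαM : q / α ≤ M) :
    MIPFeasible α q M 0 0 :=
  ⟨Or.inl rfl, by simpa using hq, by simpa using hαq, by simp,
    div_nonneg (hα.le.trans hαq) hα.le, by simpa using hqαM, le_rfl⟩

theorem mipFeasible_one_div (hα : 0 < α) (hq0 : 0 ≤ q) (hqα : q ≤ α) (hαM : α ≤ q + M)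
    (hqαM : q / α ≤ M) : MIPFeasible α q M 1 (q / α) :=
  ⟨Or.inr rfl, by simpa using hqα, by linarith, by simpa using hqαM, le_rfl, by simp,
    div_nonneg hq0 hα.le⟩

theorem setOf_exists_eq_sub_eq_singleton {P : ℝ → ℝ → Prop} {c : ℝ}
    (hP : ∀ m n, P m n → m - n = c) (hne : ∃ m n, P m n) :
    {r : ℝ | ∃ m n : ℝ, P m n ∧ r = m - n} = {c} := by
  obtain ⟨m₀, n₀, h₀⟩ := hne
  ext r
  constructor
  · rintro ⟨m, n, h, rfl⟩
    exact hP m n h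
  · rintro rfl
    exact ⟨m₀, n₀, h₀, (hP m₀ n₀ h₀).symm⟩

theorem mip_reformulation_of_binary_cvar
    (α q M : ℝ) (hα0 : 0 < α) (hα1 : α < 1) (hq0 : 0 ≤ q) (hq1 : q ≤ 1)
    (hM : 1 / α ≤ M) :
    (∀ m n : ℝ, MIPFeasible α q M m n → m - n = max 0 (1 - q / α)) ∧
    (α ≤ q → MIPFeasible α q M 0 0) ∧
    (q ≤ α → MIPFeasible α q M 1 (q / α)) ∧
    IsLeast {r : ℝ | ∃ m n : ℝ, MIPFeasible α q M m n ∧ r = m - n}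
      (max 0 (1 - q / α)) ∧
    IsGreatest {r : ℝ | ∃ m n : ℝ, MIPFeasible α q M m n ∧ r = m - n}
      (max 0 (1 - q / α)) := by
  have hqαM : q / α ≤ M := (div_le_div_of_nonneg_right hq1 hα0.le).trans hM
  have h_one_le_M : 1 ≤ M := (one_le_one_div hα0 hα1.le).trans hM
  have hf0 (h : α ≤ q) : MIPFeasible α q M 0 0 :=
    mipFeasible_zero_zero hα0 h (by linarith) hqαM
  have hf1 (h : q ≤ α) : MIPFeasible α q M 1 (q / α) :=
    mipFeasible_one_div hα0 hq0 h (by linarith) hqαM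
  have hne : ∃ m n, MIPFeasible α q M m n := by
    rcases le_total α q with h | h
    exacts [⟨0, 0, hf0 h⟩, ⟨1, q / α, hf1 h⟩]
  have hobj (m n : ℝ) (h : MIPFeasible α q M m n) : m - n = max 0 (1 - q / α) :=
    h.sub_eq_max hα0
  rw [setOf_exists_eq_sub_eq_singleton hobj hne]
  exact ⟨hobj, hf0, hf1, isLeast_singleton, isGreatest_singleton⟩
end

section
/- Let U > 0 and α ∈ (0, 1]. Let Y and Z be random variables (possibly on different probability spaces) each taking values in [0, U], with cumulative distribution functions F(y) = P(Y ≤ y) and G(y) = P(Z ≤ y). Suppose sup_{y ∈ [0, U]} |F(y) − G(y)| ≤ ε for some ε ≥ 0. Then |CVaR_α(Y) − CVaR_α(Z)| ≤ U ε / α. -/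
/-! By the layer-cake formula, `E[(ν - Y)⁺] = ∫_{t > 0} F (ν - t) dt`. Since `F` and `G` both vanish
below `0` and equal `1` from `U` on, `F - G` is supported in `[0, U]`, where it is at most `ε`, so
the two shortfall integrals differ by at most `U ε` for every `ν`. The CVaR objectives are
therefore uniformly `U ε / α`-close, and so are their suprema over `ν`. -/

open MeasureTheory

/-- `CVaR_α(Y) = sup_ν { ν − (1/α)·E[(ν − Y)^+] }`. -/
noncomputable def cvar {Ω : Type*} [MeasurableSpace Ω] (P : Measure Ω) (α : ℝ)
    (Y : Ω → ℝ) : ℝ :=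
  ⨆ ν : ℝ, (ν - (1 / α) * ∫ ω, max (ν - Y ω) 0 ∂P)

open Set

/- No boundedness is needed: if one family is unbounded above, so is the other, and both
suprema take the junk value `0`. -/
theorem abs_ciSup_sub_ciSup_le {ι : Sort*} [Nonempty ι] {f g : ι → ℝ} {c : ℝ}
    (h : ∀ i, |f i - g i| ≤ c) : |(⨆ i, f i) - ⨆ i, g i| ≤ c := by
  have hfg : ∀ i, f i ≤ g i + c := fun i => by linarith [(abs_le.1 (h i)).2]
  have hgf : ∀ i, g i ≤ f i + c := fun i => by linarith [(abs_le.1 (h i)).1]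
  by_cases hf : BddAbove (range f)
  · have hg : BddAbove (range g) := by
      obtain ⟨b, hb⟩ := hf
      exact ⟨b + c, forall_mem_range.2 fun i => (hgf i).trans (by linarith [hb (mem_range_self i)])⟩
    rw [abs_le]
    constructor
    · linarith [ciSup_le fun i => (hgf i).trans (add_le_add_left (le_ciSup hf i) c)]
    · linarith [ciSup_le fun i => (hfg i).trans (add_le_add_left (le_ciSup hg i) c)]
  · have hg : ¬BddAbove (range g) := fun ⟨b, hb⟩ =>
      hf ⟨b + c, forall_mem_range.2 fun i => (hfg i).trans (by linarith [hb (mem_range_self i)])⟩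
    rw [Real.iSup_of_not_bddAbove hf, Real.iSup_of_not_bddAbove hg, sub_zero, abs_zero]
    exact (abs_nonneg _).trans (h (Classical.arbitrary ι))

theorem abs_setIntegral_Ioi_comp_sub_sub_le {F G : ℝ → ℝ} {ν U ε : ℝ}
    (hF : IntegrableOn (fun t => F (ν - t)) (Ioi 0))
    (hG : IntegrableOn (fun t => G (ν - t)) (Ioi 0))
    (hU : 0 ≤ U) (hε : 0 ≤ ε) (hFG : ∀ y, |F y - G y| ≤ (Icc 0 U).indicator (fun _ => ε) y) :
    |(∫ t in Ioi 0, F (ν - t)) - ∫ t in Ioi 0, G (ν - t)| ≤ U * ε := by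
  have hind : Integrable ((Icc 0 U).indicator fun _ => ε) :=
    (integrable_indicator_iff measurableSet_Icc).2 (integrableOn_const measure_Icc_lt_top.ne)
  rw [← integral_sub hF hG]
  calc ‖∫ t in Ioi 0, (F (ν - t) - G (ν - t))‖
      ≤ ∫ t in Ioi 0, (Icc 0 U).indicator (fun _ => ε) (ν - t) :=
        norm_integral_le_of_norm_le (hind.comp_sub_left ν).integrableOn
          (ae_of_all _ fun t => hFG (ν - t))
    _ ≤ ∫ t, (Icc 0 U).indicator (fun _ => ε) (ν - t) :=
        setIntegral_le_integral (hind.comp_sub_left ν)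
          (ae_of_all _ fun t => indicator_nonneg (fun _ _ => hε) _)
    _ = U * ε := by
        rw [integral_sub_left_eq_self _ volume ν, integral_indicator_const _ measurableSet_Icc,
          Real.volume_real_Icc_of_le hU, sub_zero, smul_eq_mul]

section Shortfall

variable {Ω : Type*} [MeasurableSpace Ω] {P : Measure Ω} {Y : Ω → ℝ}

theorem integrable_max_sub_zero [IsFiniteMeasure P] (hY : Measurable Y) (hY0 : ∀ ω, 0 ≤ Y ω)
    (ν : ℝ) : Integrable (fun ω => max (ν - Y ω) 0) P := by
  refine Integrable.mono' (integrable_const (max ν 0))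
    ((hY.const_sub ν).max measurable_const).aestronglyMeasurable (ae_of_all _ fun ω => ?_)
  rw [Real.norm_eq_abs, abs_of_nonneg (le_max_right _ _)]
  exact max_le_max_right 0 (by linarith [hY0 ω])

theorem integral_max_sub_zero_eq_integral_measureReal_le [IsFiniteMeasure P] (hY : Measurable Y)
    (hY0 : ∀ ω, 0 ≤ Y ω) (ν : ℝ) :
    ∫ ω, max (ν - Y ω) 0 ∂P = ∫ t in Ioi 0, P.real {ω | Y ω ≤ ν - t} := by
  rw [(integrable_max_sub_zero hY hY0 ν).integral_eq_integral_meas_le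
    (ae_of_all _ fun ω => le_max_right _ _)]
  refine setIntegral_congr_fun measurableSet_Ioi fun t (ht : 0 < t) => ?_
  congr 1
  ext ω
  simp only [mem_ofPred_eq, le_max_iff, not_le.2 ht, or_false]
  constructor <;> intro h <;> linarith

theorem measureReal_le_eq_zero_of_neg (hY0 : ∀ ω, 0 ≤ Y ω) {y : ℝ} (hy : y < 0) :
    P.real {ω | Y ω ≤ y} = 0 := by
  rw [show {ω | Y ω ≤ y} = ∅ from eq_empty_of_forall_notMem fun ω (h : Y ω ≤ y) => by
    linarith [hY0 ω], measureReal_empty]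

theorem measureReal_le_eq_one_of_le [IsProbabilityMeasure P] {U : ℝ} (hYU : ∀ ω, Y ω ≤ U)
    {y : ℝ} (hy : U ≤ y) : P.real {ω | Y ω ≤ y} = 1 := by
  rw [show {ω | Y ω ≤ y} = univ from eq_univ_of_forall fun ω => (hYU ω).trans hy, probReal_univ]

theorem integrableOn_measureReal_le_sub [IsFiniteMeasure P] (hY0 : ∀ ω, 0 ≤ Y ω) (ν : ℝ) :
    IntegrableOn (fun t => P.real {ω | Y ω ≤ ν - t}) (Ioi 0) := by
  have hind : Integrable ((Icc 0 ν).indicator fun _ => P.real univ) :=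
    (integrable_indicator_iff measurableSet_Icc).2 (integrableOn_const measure_Icc_lt_top.ne)
  refine hind.integrableOn.mono'
    (Antitone.measurable (fun s t hst => measureReal_mono fun ω (h : Y ω ≤ ν - t) =>
      h.trans (by linarith))).aestronglyMeasurable
    (ae_restrict_of_forall_mem measurableSet_Ioi fun t (ht : 0 < t) => ?_)
  rw [Real.norm_eq_abs, abs_of_nonneg measureReal_nonneg]
  by_cases htν : t ≤ ν
  · rw [indicator_of_mem (mem_Icc.2 ⟨ht.le, htν⟩)]
    exact measureReal_mono (subset_univ _)
  · rw [measureReal_le_eq_zero_of_neg hY0 (by linarith)]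
    exact indicator_nonneg (fun _ _ => measureReal_nonneg) t

end Shortfall

theorem abs_measureReal_le_sub_le_indicator {Ω₁ Ω₂ : Type*} [MeasurableSpace Ω₁]
    [MeasurableSpace Ω₂] {P : Measure Ω₁} {Q : Measure Ω₂} [IsProbabilityMeasure P]
    [IsProbabilityMeasure Q] {Y : Ω₁ → ℝ} {Z : Ω₂ → ℝ} {U ε : ℝ}
    (hYr : ∀ ω, Y ω ∈ Icc 0 U) (hZr : ∀ ω, Z ω ∈ Icc 0 U)
    (hFG : ∀ y ∈ Icc 0 U, |P.real {ω | Y ω ≤ y} - Q.real {ω | Z ω ≤ y}| ≤ ε) (y : ℝ) :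
    |P.real {ω | Y ω ≤ y} - Q.real {ω | Z ω ≤ y}| ≤ (Icc 0 U).indicator (fun _ => ε) y := by
  by_cases hy : y ∈ Icc 0 U
  · rw [indicator_of_mem hy]
    exact hFG y hy
  rw [indicator_of_notMem hy]
  rcases not_and_or.1 hy with hy0 | hyU
  · rw [measureReal_le_eq_zero_of_neg (fun ω => (hYr ω).1) (not_le.1 hy0),
      measureReal_le_eq_zero_of_neg (fun ω => (hZr ω).1) (not_le.1 hy0), sub_zero, abs_zero]
  · rw [measureReal_le_eq_one_of_le (fun ω => (hYr ω).2) (not_le.1 hyU).le,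
      measureReal_le_eq_one_of_le (fun ω => (hZr ω).2) (not_le.1 hyU).le, sub_self, abs_zero]

theorem abs_integral_max_sub_zero_sub_le {Ω₁ Ω₂ : Type*} [MeasurableSpace Ω₁]
    [MeasurableSpace Ω₂] {P : Measure Ω₁} {Q : Measure Ω₂} [IsProbabilityMeasure P]
    [IsProbabilityMeasure Q] {Y : Ω₁ → ℝ} {Z : Ω₂ → ℝ} {U ε : ℝ} (hU : 0 ≤ U) (hε : 0 ≤ ε)
    (hY : Measurable Y) (hZ : Measurable Z) (hYr : ∀ ω, Y ω ∈ Icc 0 U) (hZr : ∀ ω, Z ω ∈ Icc 0 U)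
    (hFG : ∀ y ∈ Icc 0 U, |P.real {ω | Y ω ≤ y} - Q.real {ω | Z ω ≤ y}| ≤ ε) (ν : ℝ) :
    |∫ ω, max (ν - Y ω) 0 ∂P - ∫ ω, max (ν - Z ω) 0 ∂Q| ≤ U * ε := by
  have hY0 : ∀ ω, 0 ≤ Y ω := fun ω => (hYr ω).1
  have hZ0 : ∀ ω, 0 ≤ Z ω := fun ω => (hZr ω).1
  rw [integral_max_sub_zero_eq_integral_measureReal_le hY hY0,
    integral_max_sub_zero_eq_integral_measureReal_le hZ hZ0]
  exact abs_setIntegral_Ioi_comp_sub_sub_le (integrableOn_measureReal_le_sub hY0 ν)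
    (integrableOn_measureReal_le_sub hZ0 ν) hU hε (abs_measureReal_le_sub_le_indicator hYr hZr hFG)

theorem cvar_lipschitz_in_cdf
    {Ω₁ Ω₂ : Type*} [MeasurableSpace Ω₁] [MeasurableSpace Ω₂]
    (P : Measure Ω₁) (Q : Measure Ω₂)
    [IsProbabilityMeasure P] [IsProbabilityMeasure Q]
    (U : ℝ) (hU : 0 < U) (α : ℝ) (hα : α ∈ Set.Ioc (0 : ℝ) 1)
    (Y : Ω₁ → ℝ) (Z : Ω₂ → ℝ) (hY : Measurable Y) (hZ : Measurable Z)
    (hYr : ∀ ω, Y ω ∈ Set.Icc (0 : ℝ) U) (hZr : ∀ ω, Z ω ∈ Set.Icc (0 : ℝ) U)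
    (ε : ℝ) (hε : 0 ≤ ε)
    (hFG : ∀ y ∈ Set.Icc (0 : ℝ) U,
      |(P {ω | Y ω ≤ y}).toReal - (Q {ω | Z ω ≤ y}).toReal| ≤ ε) :
    |cvar P α Y - cvar Q α Z| ≤ U * ε / α := by
  refine abs_ciSup_sub_ciSup_le fun ν => ?_
  have hshortfall := abs_integral_max_sub_zero_sub_le hU.le hε hY hZ hYr hZr hFG ν
  rw [show ∀ a b : ℝ, ν - 1 / α * a - (ν - 1 / α * b) = (b - a) / α by intros; ring,
    abs_div, abs_of_pos hα.1, abs_sub_comm]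
  exact div_le_div_of_nonneg_right hshortfall hα.1.le
end
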